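/- arXiv:2404.01510 — 6 statements merged into one kernel-verified Lean document; each statement's English description precedes it below -/
import Mathlib

section
/- Every characteristic matrix over the polytope (Δ³)ⁿ is equivalent to a block matrix of the form (E₃ a₁₁ | ⋯ | E₃ aₙₙ) placed so that the columns indexed by facets F_{i1},F_{i2},F_{i3} carry the i-th block of the 3n×3n identity, and the column of F_{i4} is the vector (a_{1i},…,a_{ni}) with a_{ij} ∈ ℤ³, where a_{ii} = ᵗ(1,1,1) for all i. -/
/-
Let `M` be the minor of `A` at the vertex omitting every last facet `F_{i4}`; it is unimodular, and
`M⁻¹ A` is again characteristic with the identity in the columns `F_{i1}, F_{i2}, F_{i3}`. At the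
vertex omitting `F_{ij}` and all other `F_{k4}`, the minor of `M⁻¹ A` is, up to a column
permutation, the identity with column `(i, j)` replaced by the column of `F_{i4}`, so its
determinant is `±` the entry `(i, j)` of that column, which is therefore `±1`. Multiplying the
rows and the columns `F_{i1}, F_{i2}, F_{i3}` by these signs turns all of them into `1`.
-/

/- The polytope (Δ³)ⁿ has facets F_{ij}, indexed by `(i, j) : Fin n × Fin 4`.
A collection of 3n facets of (Δ³)ⁿ meets at a vertex exactly when it omits,
for each `i`, precisely one facet `(i, ω i)`; the remaining column indices are
enumerated by `(i, (ω i).succAbove j)` for `j : Fin 3`. -/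

/-- A characteristic matrix over `(Δ³)ⁿ`: a `3n × 4n` integer matrix (rows
`Fin n × Fin 3`, columns indexed by the facets `Fin n × Fin 4`) such that the
3n columns corresponding to any 3n facets meeting at a vertex form a matrix of
determinant ±1. -/
def IsCharMatrixDelta3 (n : ℕ)
    (A : Matrix (Fin n × Fin 3) (Fin n × Fin 4) ℤ) : Prop :=
  ∀ ω : Fin n → Fin 4,
    IsUnit (Matrix.det (Matrix.of fun r c : Fin n × Fin 3 =>
      A r (c.1, (ω c.1).succAbove c.2)))

/-- Equivalence of characteristic matrices over `(Δ³)ⁿ`: `A = α·(Q B D)` with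
`Q ∈ GL_{3n}(ℤ)`, `D` diagonal with entries ±1, and `α` an automorphism of
`(Δ³)ⁿ` acting on the columns (the automorphisms of `(Δ³)ⁿ` permute the `n`
simplex factors and the 4 facets within each factor). -/
def CharEquivDelta3 (n : ℕ)
    (A B : Matrix (Fin n × Fin 3) (Fin n × Fin 4) ℤ) : Prop :=
  ∃ (Q : Matrix (Fin n × Fin 3) (Fin n × Fin 3) ℤ), IsUnit Q.det ∧
  ∃ D : Fin n × Fin 4 → ℤ, (∀ c, D c = 1 ∨ D c = -1) ∧
  ∃ (σ : Equiv.Perm (Fin n)) (τ : Fin n → Equiv.Perm (Fin 4)),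
    ∀ r c, A r c = (Q * B * Matrix.diagonal D) r (σ c.1, τ c.1 c.2)

open Matrix

lemma Matrix.det_one_updateCol {m R : Type*} [Fintype m] [DecidableEq m] [CommRing R]
    (k : m) (v : m → R) : ((1 : Matrix m m R).updateCol k v).det = v k := by
  rw [← cramer_apply, cramer_one]
  rfl

lemma Int.diagonal_mul_diagonal_self {ι : Type*} [Fintype ι] [DecidableEq ι] {s : ι → ℤ}
    (hs : ∀ i, IsUnit (s i)) : diagonal s * diagonal s = 1 := by
  rw [diagonal_mul_diagonal, ← diagonal_one]
  exact congrArg diagonal (funext fun i => Int.isUnit_mul_self (hs i))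

lemma Int.isUnit_det_diagonal {ι : Type*} [Fintype ι] [DecidableEq ι] {s : ι → ℤ}
    (hs : ∀ i, IsUnit (s i)) : IsUnit (diagonal s).det :=
  IsUnit.of_mul_eq_one _ <| by rw [← det_mul, Int.diagonal_mul_diagonal_self hs, det_one]

/-- `j ↦ (castSucc j₀).succAbove j` with the last facet renamed `j₀`: in the vertex minor omitting
facet `j₀`, the column of the last facet takes the place of column `j₀`. -/
noncomputable def vertexFacetPerm (j₀ : Fin 3) : Equiv.Perm (Fin 3) :=
  Equiv.ofBijective
    (fun j => Fin.lastCases (motive := fun _ => Fin 3) j₀ id ((Fin.castSucc j₀).succAbove j))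
    (by revert j₀; decide)

lemma castSucc_succAbove_eq_vertexFacetPerm (j₀ j : Fin 3) :
    (Fin.castSucc j₀).succAbove j =
      if vertexFacetPerm j₀ j = j₀ then Fin.last 3 else Fin.castSucc (vertexFacetPerm j₀ j) := by
  revert j₀ j; decide

section CharMatrix

variable {n : ℕ}

def vertexMinor {R : Type*} (A : Matrix (Fin n × Fin 3) (Fin n × Fin 4) R) (ω : Fin n → Fin 4) :
    Matrix (Fin n × Fin 3) (Fin n × Fin 3) R :=
  Matrix.of fun r c => A r (c.1, (ω c.1).succAbove c.2)

lemma vertexMinor_mul_left {R : Type*} [CommRing R] (Q : Matrix (Fin n × Fin 3) (Fin n × Fin 3) R)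
    (A : Matrix (Fin n × Fin 3) (Fin n × Fin 4) R) (ω : Fin n → Fin 4) :
    vertexMinor (Q * A) ω = Q * vertexMinor A ω := by
  ext r c
  simp [vertexMinor, mul_apply]

lemma IsCharMatrixDelta3.mul_left {A : Matrix (Fin n × Fin 3) (Fin n × Fin 4) ℤ}
    (hA : IsCharMatrixDelta3 n A) {Q : Matrix (Fin n × Fin 3) (Fin n × Fin 3) ℤ}
    (hQ : IsUnit Q.det) : IsCharMatrixDelta3 n (Q * A) := fun ω => by
  change IsUnit (vertexMinor (Q * A) ω).det
  rw [vertexMinor_mul_left, det_mul]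
  exact hQ.mul (hA ω)

lemma CharEquivDelta3.mul_left {A B : Matrix (Fin n × Fin 3) (Fin n × Fin 4) ℤ}
    (h : CharEquivDelta3 n A B) {P : Matrix (Fin n × Fin 3) (Fin n × Fin 3) ℤ}
    (hP : IsUnit P.det) : CharEquivDelta3 n (P * A) B := by
  obtain ⟨Q, hQ, D, hD, σ, τ, hA⟩ := h
  refine ⟨P * Q, by rw [det_mul]; exact hP.mul hQ, D, hD, σ, τ, fun r c => ?_⟩
  simp only [Matrix.mul_assoc P Q, Matrix.mul_assoc P (Q * B)]
  simp only [mul_apply (M := P), hA]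

lemma charEquivDelta3_of_eq_mul {A B : Matrix (Fin n × Fin 3) (Fin n × Fin 4) ℤ}
    {Q : Matrix (Fin n × Fin 3) (Fin n × Fin 3) ℤ} (hQ : IsUnit Q.det)
    {D : Fin n × Fin 4 → ℤ} (hD : ∀ c, IsUnit (D c)) (h : A = Q * B * diagonal D) :
    CharEquivDelta3 n A B :=
  ⟨Q, hQ, D, fun c => Int.isUnit_iff.mp (hD c), 1, fun _ => 1, by simp [h]⟩

variable {B : Matrix (Fin n × Fin 3) (Fin n × Fin 4) ℤ}

lemma apply_castSucc_of_vertexMinor_last_eq_one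
    (hI : vertexMinor B (fun _ => Fin.last 3) = 1) (i : Fin n) (j : Fin 3) (r : Fin n × Fin 3) :
    B r (i, Fin.castSucc j) = (1 : Matrix (Fin n × Fin 3) (Fin n × Fin 3) ℤ) r (i, j) := by
  rw [← hI, vertexMinor, of_apply, Fin.succAbove_last]

lemma vertexMinor_update_eq_submatrix (hI : vertexMinor B (fun _ => Fin.last 3) = 1)
    (i₀ : Fin n) (j₀ : Fin 3) :
    vertexMinor B (Function.update (fun _ => Fin.last 3) i₀ (Fin.castSucc j₀)) =
      ((1 : Matrix _ _ ℤ).updateCol (i₀, j₀) fun r => B r (i₀, Fin.last 3)).submatrix id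
        (Equiv.prodShear (Equiv.refl _) (Function.update 1 i₀ (vertexFacetPerm j₀))) := by
  ext r ⟨i, j⟩
  simp only [vertexMinor, of_apply, submatrix_apply, id_eq, Equiv.prodShear_apply,
    Equiv.refl_apply, updateCol_apply, Prod.mk.injEq]
  by_cases hi : i = i₀
  · subst hi
    rw [Function.update_self, Function.update_self, castSucc_succAbove_eq_vertexFacetPerm]
    simp only [true_and]
    split_ifs
    · rfl
    · exact apply_castSucc_of_vertexMinor_last_eq_one hI _ _ r
  · rw [Function.update_of_ne hi, Function.update_of_ne hi, Fin.succAbove_last]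
    simp only [hi, false_and, if_false]
    exact apply_castSucc_of_vertexMinor_last_eq_one hI _ _ r

lemma IsCharMatrixDelta3.isUnit_apply_last (hB : IsCharMatrixDelta3 n B)
    (hI : vertexMinor B (fun _ => Fin.last 3) = 1) (i : Fin n) (j : Fin 3) :
    IsUnit (B (i, j) (i, Fin.last 3)) := by
  have h := hB (Function.update (fun _ => Fin.last 3) i (Fin.castSucc j))
  change IsUnit (vertexMinor B _).det at h
  rw [vertexMinor_update_eq_submatrix hI, det_permute', det_one_updateCol] at h
  exact (IsUnit.mul_iff.mp h).2

lemma exists_normalForm_of_vertexMinor_last_eq_one (hB : IsCharMatrixDelta3 n B)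
    (hI : vertexMinor B (fun _ => Fin.last 3) = 1) :
    ∃ B' : Matrix (Fin n × Fin 3) (Fin n × Fin 4) ℤ,
      CharEquivDelta3 n B B' ∧
      (∀ (i : Fin n) (j : Fin 3) (r : Fin n × Fin 3),
        B' r (i, Fin.castSucc j) = if r = (i, j) then 1 else 0) ∧
      (∀ (i : Fin n) (j' : Fin 3), B' (i, j') (i, (3 : Fin 4)) = 1) := by
  set ε : Fin n × Fin 3 → ℤ := fun r => B r (r.1, Fin.last 3)
  have hε : ∀ r, IsUnit (ε r) := fun r => hB.isUnit_apply_last hI r.1 r.2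
  set d : Fin n × Fin 4 → ℤ := fun c => Fin.lastCases 1 (fun j => ε (c.1, j)) c.2
  have hd : ∀ c, IsUnit (d c) := fun ⟨i, k⟩ => by
    induction k using Fin.lastCases with
    | last => simp only [d, Fin.lastCases_last, isUnit_one]
    | cast j => simp only [d, Fin.lastCases_castSucc, hε]
  have hB' : B = diagonal ε * (diagonal ε * B * diagonal d) * diagonal d := by
    simp only [← Matrix.mul_assoc, Int.diagonal_mul_diagonal_self hε, Matrix.one_mul]
    rw [Matrix.mul_assoc B, Int.diagonal_mul_diagonal_self hd, Matrix.mul_one]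
  refine ⟨diagonal ε * B * diagonal d,
    charEquivDelta3_of_eq_mul (Int.isUnit_det_diagonal hε) hd hB', fun i j r => ?_,
    fun i j => ?_⟩
  · rw [mul_diagonal, diagonal_mul, apply_castSucc_of_vertexMinor_last_eq_one hI, one_apply]
    split_ifs with hr
    · subst hr
      simp only [mul_one, d, Fin.lastCases_castSucc]
      exact Int.isUnit_mul_self (hε (i, j))
    · simp only [mul_zero, zero_mul]
  · rw [mul_diagonal, diagonal_mul]
    change ε (i, j) * ε (i, j) * d (i, Fin.last 3) = 1
    rw [show d (i, Fin.last 3) = 1 from Fin.lastCases_last, mul_one]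
    exact Int.isUnit_mul_self (hε (i, j))

end CharMatrix

theorem stmt6 (n : ℕ) (A : Matrix (Fin n × Fin 3) (Fin n × Fin 4) ℤ)
    (hA : IsCharMatrixDelta3 n A) :
    ∃ B : Matrix (Fin n × Fin 3) (Fin n × Fin 4) ℤ,
      CharEquivDelta3 n A B ∧
      (∀ (i : Fin n) (j : Fin 3) (r : Fin n × Fin 3),
        B r (i, Fin.castSucc j) = if r = (i, j) then 1 else 0) ∧
      (∀ (i : Fin n) (j' : Fin 3), B (i, j') (i, (3 : Fin 4)) = 1) := by
  set M := vertexMinor A fun _ => Fin.last 3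
  have hM : IsUnit M.det := hA fun _ => Fin.last 3
  have hI : vertexMinor (M⁻¹ * A) (fun _ => Fin.last 3) = 1 := by
    rw [vertexMinor_mul_left, nonsing_inv_mul _ hM]
  obtain ⟨B, hequiv, hform⟩ :=
    exists_normalForm_of_vertexMinor_last_eq_one (hA.mul_left (isUnit_nonsing_inv_det _ hM)) hI
  have hA_eq : A = M * (M⁻¹ * A) := by rw [← Matrix.mul_assoc, mul_nonsing_inv _ hM, Matrix.one_mul]
  exact ⟨B, hA_eq ▸ hequiv.mul_left hM, hform⟩
end

section
/- In the graded ring H*(M(A);ℤ₂) = ℤ₂[t₁,…,t_n]/(q₁,…,q_n) with q_i = t_i · ∏_{j=1}^{3} ( ∑_{k=1}^{n} a_{ik}^j t_k ) and a_{ii} = ᵗ(1,1,1), the Steenrod square satisfies Sq²q_i = ∑_{k ≠ i} (a_{ik}^1 + a_{ik}^2 + a_{ik}^3) t_k q_i. -/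
namespace MvPolynomial

variable {R σ : Type*} [CommSemiring R] [Fintype σ]

theorem sum_fin_three_sum_C_mul_X (c : σ → Fin 3 → R) :
    ∑ j : Fin 3, ∑ k, C (c k j) * (X k : MvPolynomial σ R)
      = ∑ k, C (c k 0 + c k 1 + c k 2) * X k := by
  rw [Finset.sum_comm]
  simp only [Fin.sum_univ_three, map_add, add_mul]

theorem X_add_sum_C_mul_X_eq_sum_erase [CharP R 2] [DecidableEq σ] (b : σ → R) {i : σ}
    (hb : b i = 1) :
    X i + ∑ k, C (b k) * (X k : MvPolynomial σ R)
      = ∑ k ∈ Finset.univ.erase i, C (b k) * X k := by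
  rw [← Finset.add_sum_erase _ _ (Finset.mem_univ i), hb, map_one, one_mul, ← add_assoc,
    CharTwo.add_self_eq_zero, zero_add]

end MvPolynomial

open MvPolynomial

theorem stmt7_general (n : ℕ) (a : Fin n → Fin n → Fin 3 → ZMod 2)
    (ha : ∀ i j, a i i j = 1)
    (q : Fin n → MvPolynomial (Fin n) (ZMod 2))
    (i : Fin n) :
    -- Sq² q_i, computed via the Cartan formula, …
    (X i + ∑ j : Fin 3, ∑ k, C (a i k j) * X k) * q i
      -- … equals ∑_{k ≠ i} (a_{ik}¹ + a_{ik}² + a_{ik}³) t_k q_i :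
      = ∑ k ∈ Finset.univ.erase i, C (a i k 0 + a i k 1 + a i k 2) * (X k * q i) := by
  -- the diagonal coefficient is 1 + 1 + 1 = 1, so the `t_i` term cancels against `X i` mod 2
  have hdiag : a i i 0 + a i i 1 + a i i 2 = 1 := by simp only [ha]; decide
  rw [sum_fin_three_sum_C_mul_X,
    X_add_sum_C_mul_X_eq_sum_erase (fun k ↦ a i k 0 + a i k 1 + a i k 2) hdiag, Finset.sum_mul]
  simp only [mul_assoc]

theorem stmt7 (n : ℕ) (a : Fin n → Fin n → Fin 3 → ZMod 2)
    (ha : ∀ i j, a i i j = 1)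
    (q : Fin n → MvPolynomial (Fin n) (ZMod 2))
    (hq : ∀ i, q i = X i * ∏ j : Fin 3, (∑ k, C (a i k j) * X k)) (i : Fin n) :
    -- Sq² q_i, computed via the Cartan formula, …
    (X i + ∑ j : Fin 3, ∑ k, C (a i k j) * X k) * q i
      -- … equals ∑_{k ≠ i} (a_{ik}¹ + a_{ik}² + a_{ik}³) t_k q_i :
      = ∑ k ∈ Finset.univ.erase i, C (a i k 0 + a i k 1 + a i k 2) * (X k * q i) :=
  stmt7_general n a ha q i
end

section
/- For n ≥ 1 and a positive integer k, let H(k,n) = ℤ[t₁,…,t_n]/(t₁⁴+kt₁³t₂, …, t_{n-1}⁴+k t_{n-1}³ t_n, t_n⁴) with |t_i| = 2. If x ∈ H(k,n) has degree 2 and x⁴ = 0, then x = a·t_n for some a ∈ ℤ. -/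
open MvPolynomial

/- The graded ring H(k,n) = ℤ[t₁,…,t_n]/(t₁⁴+kt₁³t₂, …, t_{n-1}⁴+kt_{n-1}³t_n, t_n⁴)
with |t_i| = 2.  We index the `n` variables t₁,…,t_n of the paper by `Fin n`;
a homogeneous element of topological degree `2*j` is (the class of) a polynomial
that is homogeneous of polynomial degree `j`. -/

/-- The ideal (t₁⁴+kt₁³t₂, …, t_{n-1}⁴+k t_{n-1}³t_n, t_n⁴), with the `n`
variables indexed by `Fin (n+1)` for `n+1` variables... -/
noncomputable def Hideal (k n : ℕ) : Ideal (MvPolynomial (Fin (n + 1)) ℤ) :=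
  Ideal.span ({X (Fin.last n) ^ 4} ∪
    Set.range fun i : Fin n =>
      X (Fin.castSucc i) ^ 4 + (k : ℤ) • (X (Fin.castSucc i) ^ 3 * X i.succ))

/-- The ring `H(k, n+1 vars)`: `H k n` has `n+1` variables `t₀,…,t_n`,
so it is the ring H(k, n+1) of the paper. -/
noncomputable abbrev HRing (k n : ℕ) : Type :=
  MvPolynomial (Fin (n + 1)) ℤ ⧸ Hideal k n

/-- The generator t_i of H(k,n). -/
noncomputable def Ht (k n : ℕ) (i : Fin (n + 1)) : HRing k n :=
  Ideal.Quotient.mk _ (X i)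

/-- A ring homomorphism `HRing k n → HRing l n` preserves the grading (all
gradings in sight are concentrated in even topological degrees `2*j`) if it
sends classes of homogeneous polynomials of degree `j` to classes of
homogeneous polynomials of degree `j`, for every `j`. -/
def PreservesGrading {k l n : ℕ} (f : HRing k n →+* HRing l n) : Prop :=
  ∀ (j : ℕ) (x : MvPolynomial (Fin (n + 1)) ℤ), x.IsHomogeneous j →
    ∃ y : MvPolynomial (Fin (n + 1)) ℤ, y.IsHomogeneous j ∧
      f (Ideal.Quotient.mk _ x) = Ideal.Quotient.mk _ y

/-- A graded (ring/algebra) isomorphism H(k,n) ≅ H(l,n): a ring isomorphism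
preserving the grading in both directions.  (Every ring homomorphism between
these rings is automatically a ℤ-algebra homomorphism.) -/
def IsGradedIso {k l n : ℕ} (f : HRing k n ≃+* HRing l n) : Prop :=
  PreservesGrading (f : HRing k n →+* HRing l n) ∧
    PreservesGrading (f.symm : HRing l n →+* HRing k n)

/-! Write `x` as the class of a linear form `∑ aⱼ tⱼ`. For each adjacent pair of variables,
sending `tᵢ ↦ u`, `tᵢ₊₁ ↦ v` and every other variable to `0` respects the relations and lands
in `ℤ[u,v]/(u⁴ + k u³v, v⁴)`, where `x⁴ = 0` becomes `(aᵢu + aᵢ₊₁v)⁴ = 0`. The coefficient of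
`u²v²` and the combination `coeff(u³v) - k coeff(u⁴)` vanish on that ideal, giving
`6aᵢ²aᵢ₊₁² = 0` and `4aᵢ³aᵢ₊₁ = k aᵢ⁴`, so `aᵢ = 0` as `k > 0`. Only `a_last` survives. -/

open Finsupp

theorem Finsupp.exists_eq_single_of_degree_eq_one {σ : Type*} {d : σ →₀ ℕ}
    (h : d.degree = 1) : ∃ j, d = single j 1 := by
  classical
  obtain ⟨j, hj⟩ := Multiset.card_eq_one.mp ((card_toMultiset d).trans h)
  exact ⟨j, by rw [← Multiset.toFinsupp_eq_iff.mpr hj.symm, Multiset.toFinsupp_singleton]⟩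

theorem MvPolynomial.IsHomogeneous.eq_sum_smul_X {σ R : Type*} [Fintype σ] [CommSemiring R]
    {p : MvPolynomial σ R} (hp : p.IsHomogeneous 1) :
    p = ∑ j, coeff (single j 1) p • X j := by
  classical
  ext m
  simp only [coeff_sum, coeff_smul, coeff_X, smul_eq_mul, mul_ite, mul_one, mul_zero]
  by_cases hm : m.degree = 1
  · obtain ⟨j, rfl⟩ := exists_eq_single_of_degree_eq_one hm
    simp [single_left_inj]
  · rw [hp.coeff_eq_zero hm, Finset.sum_eq_zero]
    rintro j -
    rw [if_neg]
    rintro rfl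
    exact hm (degree_single _ _)

lemma smul_X_add_smul_X_pow_four {R : Type*} [CommRing R] (a b : R) :
    (a • X 0 + b • X 1 : MvPolynomial (Fin 2) R) ^ 4 =
      monomial (single 0 4) (a ^ 4) + monomial (single 0 3 + single 1 1) (4 * a ^ 3 * b) +
        monomial (single 0 2 + single 1 2) (6 * a ^ 2 * b ^ 2) +
        monomial (single 0 1 + single 1 3) (4 * a * b ^ 3) + monomial (single 1 4) (b ^ 4) := by
  simp only [monomial_add_single, ← C_mul_X_pow_eq_monomial, smul_eq_C_mul, map_mul, map_pow,
    map_ofNat]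
  ring

lemma hideal_one_eq (k : ℕ) : Hideal k 1 = Ideal.span
    {monomial (single 0 4) 1 + monomial (single 0 3 + single 1 1) (k : ℤ),
      monomial (single 1 4) 1} := by
  simp only [monomial_add_single, ← C_mul_X_pow_eq_monomial, C_1, one_mul, pow_one,
    ← smul_eq_C_mul]
  rw [Hideal, Set.range_unique, Set.singleton_union, Set.pair_comm]
  simp only [smul_mul_assoc]
  rfl

lemma coeff_X_zero_sq_X_one_sq_eq_zero_of_mem_hideal {k : ℕ} {p : MvPolynomial (Fin 2) ℤ}
    (hp : p ∈ Hideal k 1) : coeff (single 0 2 + single 1 2) p = 0 := by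
  rw [hideal_one_eq, Ideal.mem_span_pair] at hp
  obtain ⟨q₀, q₁, rfl⟩ := hp
  simp [mul_add, coeff_mul_monomial', le_def, Fin.forall_fin_two]

lemma coeff_X_zero_pow_three_X_one_eq_of_mem_hideal {k : ℕ} {p : MvPolynomial (Fin 2) ℤ}
    (hp : p ∈ Hideal k 1) : coeff (single 0 3 + single 1 1) p = k * coeff (single 0 4) p := by
  rw [hideal_one_eq, Ideal.mem_span_pair] at hp
  obtain ⟨q₀, q₁, rfl⟩ := hp
  simp [mul_add, coeff_mul_monomial', le_def, Fin.forall_fin_two, mul_comm]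

lemma eq_zero_of_smul_X_add_smul_X_pow_four_mem_hideal {k : ℕ} (hk : 0 < k) {a b : ℤ}
    (h : (a • X 0 + b • X 1 : MvPolynomial (Fin 2) ℤ) ^ 4 ∈ Hideal k 1) : a = 0 := by
  rw [smul_X_add_smul_X_pow_four] at h
  have h22 : 6 * a ^ 2 * b ^ 2 = 0 := by
    simpa [coeff_monomial, Finsupp.ext_iff, Fin.forall_fin_two]
      using coeff_X_zero_sq_X_one_sq_eq_zero_of_mem_hideal h
  have h31 : 4 * a ^ 3 * b = k * a ^ 4 := by
    simpa [coeff_monomial, Finsupp.ext_iff, Fin.forall_fin_two]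
      using coeff_X_zero_pow_three_X_one_eq_of_mem_hideal h
  obtain rfl | rfl : a = 0 ∨ b = 0 := by simpa using h22
  · rfl
  · simpa [hk.ne'] using h31

lemma ht_last_pow_four (k n : ℕ) : Ht k n (Fin.last n) ^ 4 = 0 := by
  rw [Ht, ← map_pow, Ideal.Quotient.eq_zero_iff_mem]
  exact Ideal.subset_span (Or.inl rfl)

lemma ht_castSucc_pow_four_add (k n : ℕ) (i : Fin n) :
    Ht k n i.castSucc ^ 4 + (k : ℤ) • (Ht k n i.castSucc ^ 3 * Ht k n i.succ) = 0 := by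
  simp only [Ht, ← map_pow, ← map_mul, ← map_zsmul, ← map_add, Ideal.Quotient.eq_zero_iff_mem]
  exact Ideal.subset_span (Or.inr ⟨i, rfl⟩)

lemma eq_zero_of_smul_ht_add_smul_ht_pow_four_eq_zero {k : ℕ} (hk : 0 < k) {a b : ℤ}
    (h : (a • Ht k 1 0 + b • Ht k 1 1) ^ 4 = 0) : a = 0 := by
  refine eq_zero_of_smul_X_add_smul_X_pow_four_mem_hideal hk (b := b) ?_
  rwa [← Ideal.Quotient.eq_zero_iff_mem, map_pow, map_add, map_zsmul, map_zsmul]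

lemma hideal_le_ker_aeval {R : Type*} [CommRing R] {k n : ℕ} (f : Fin (n + 1) → R)
    (hlast : f (Fin.last n) ^ 4 = 0)
    (hrel : ∀ i : Fin n, f i.castSucc ^ 4 + (k : ℤ) • (f i.castSucc ^ 3 * f i.succ) = 0) :
    Hideal k n ≤ RingHom.ker (aeval f) := by
  rw [Hideal, Ideal.span_le]
  rintro _ (rfl | ⟨i, rfl⟩)
  · simpa using hlast
  · simpa using hrel i

noncomputable def adjacentPairSubst (k : ℕ) {n : ℕ} (i : Fin n) : Fin (n + 1) → HRing k 1 :=
  Pi.single i.castSucc (Ht k 1 0) + Pi.single i.succ (Ht k 1 1)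

lemma aeval_adjacentPairSubst_eq_zero_of_mem_hideal {k n : ℕ} (i : Fin n)
    {p : MvPolynomial (Fin (n + 1)) ℤ} (hp : p ∈ Hideal k n) :
    aeval (adjacentPairSubst k i) p = 0 := by
  have hu := ht_castSucc_pow_four_add k 1 0
  have hv := ht_last_pow_four k 1
  simp only [Fin.castSucc_zero, Fin.succ_zero_eq_one] at hu
  refine hideal_le_ker_aeval _ ?_ (fun j => ?_) hp
  all_goals
    simp only [adjacentPairSubst, Pi.add_apply, Pi.single_apply, Fin.ext_iff, Fin.val_castSucc,
        Fin.val_succ, Fin.val_last]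
    split_ifs <;> first | omega | simp_all

lemma aeval_adjacentPairSubst_sum_smul_X {k n : ℕ} (i : Fin n) (a : Fin (n + 1) → ℤ) :
    aeval (adjacentPairSubst k i) (∑ j, a j • X j : MvPolynomial (Fin (n + 1)) ℤ) =
      a i.castSucc • Ht k 1 0 + a i.succ • Ht k 1 1 := by
  simp [adjacentPairSubst, Pi.single_apply, mul_add, Finset.sum_add_distrib]

lemma coeff_castSucc_eq_zero_of_pow_four_mem_hideal {k n : ℕ} (hk : 0 < k)
    {p : MvPolynomial (Fin (n + 1)) ℤ} (hp : p.IsHomogeneous 1) (h4 : p ^ 4 ∈ Hideal k n)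
    (i : Fin n) : coeff (single i.castSucc 1) p = 0 := by
  have h := aeval_adjacentPairSubst_eq_zero_of_mem_hideal i h4
  rw [map_pow, hp.eq_sum_smul_X, aeval_adjacentPairSubst_sum_smul_X] at h
  exact eq_zero_of_smul_ht_add_smul_ht_pow_four_eq_zero hk h

lemma eq_smul_X_last_of_pow_four_mem_hideal {k n : ℕ} (hk : 0 < k)
    {p : MvPolynomial (Fin (n + 1)) ℤ} (hp : p.IsHomogeneous 1) (h4 : p ^ 4 ∈ Hideal k n) :
    p = coeff (single (Fin.last n) 1) p • X (Fin.last n) := by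
  conv_lhs => rw [hp.eq_sum_smul_X]
  simp [Fin.sum_univ_castSucc, coeff_castSucc_eq_zero_of_pow_four_mem_hideal hk hp h4]

theorem stmt9 (k n : ℕ) (hk : 0 < k) (x : HRing k n)
    (hx : ∃ p : MvPolynomial (Fin (n + 1)) ℤ, p.IsHomogeneous 1 ∧
      x = Ideal.Quotient.mk _ p)
    (h4 : x ^ 4 = 0) :
    ∃ a : ℤ, x = a • Ht k n (Fin.last n) := by
  obtain ⟨p, hp, rfl⟩ := hx
  have hp4 : p ^ 4 ∈ Hideal k n := by rwa [← Ideal.Quotient.eq_zero_iff_mem, map_pow]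
  refine ⟨coeff (single (Fin.last n) 1) p, ?_⟩
  conv_lhs => rw [eq_smul_X_last_of_pow_four_mem_hideal hk hp hp4]
  rw [map_zsmul]
  rfl
end

section
/- In H(k,n) = ℤ[t₁,…,t_n]/(t₁⁴+kt₁³t₂, …, t_{n-1}⁴+k t_{n-1}³ t_n, t_n⁴), one has t_i⁴ = 0 if and only if i = n. -/
/-!
If `t_i⁴` with `i < n` lay in the ideal, then so would its degree-4 part, which lies in the
ℤ-span of the (homogeneous, degree-4) relations. The ℤ-linear functional
`k · [t_i⁴] - [t_i³ t_{i+1}]` (brackets denote coefficients) kills every relation: it sees only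
`t_i⁴ + k t_i³ t_{i+1}`, on which it gives `k - k`. But it takes the value `k ≠ 0` on `t_i⁴`.
-/

open MvPolynomial

namespace MvPolynomial

section Homogeneous

variable {σ R : Type*} [CommSemiring R]

attribute [local instance] MvPolynomial.gradedAlgebra in
theorem homogeneousComponent_mul_of_isHomogeneous {d : ℕ} {g : MvPolynomial σ R}
    (hg : g.IsHomogeneous d) (p : MvPolynomial σ R) :
    homogeneousComponent d (p * g) = C (coeff 0 p) * g := by
  have := DirectSum.coe_decompose_mul_of_right_mem (homogeneousSubmodule σ R) d
    (a := p) (mem_homogeneousSubmodule d g |>.mpr hg)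
  rwa [if_pos le_rfl, Nat.sub_self, DirectSum.decompose, Equiv.coe_fn_mk,
    decomposition.decompose'_apply, decomposition.decompose'_apply,
    homogeneousComponent_zero] at this

theorem homogeneousComponent_mem_span_of_mem_ideal_span {d : ℕ} {S : Set (MvPolynomial σ R)}
    (hS : ∀ g ∈ S, g.IsHomogeneous d) {x : MvPolynomial σ R} (hx : x ∈ Ideal.span S) :
    homogeneousComponent d x ∈ Submodule.span R S := by
  suffices ∀ p, homogeneousComponent d (p * x) ∈ Submodule.span R S by simpa using this 1
  induction hx using Submodule.span_induction with
  | mem g hg =>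
    intro p
    rw [homogeneousComponent_mul_of_isHomogeneous (hS g hg), ← smul_eq_C_mul]
    exact Submodule.smul_mem _ _ (Submodule.subset_span hg)
  | zero => simp
  | add x y _ _ hx hy => intro p; rw [mul_add, map_add]; exact add_mem (hx p) (hy p)
  | smul a x _ hx => intro p; rw [smul_eq_mul, ← mul_assoc]; exact hx (p * a)

end Homogeneous

lemma X_pow_three_mul_X {σ R : Type*} [CommSemiring R] (a b : σ) :
    (X a ^ 3 * X b : MvPolynomial σ R) = monomial (Finsupp.single a 3 + Finsupp.single b 1) 1 := by
  rw [X_pow_eq_monomial, X, monomial_mul, one_mul]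

section RelationFunctional

open Finsupp

variable {σ : Type*} [DecidableEq σ] (k : ℤ) {i j : σ}

noncomputable def relationFunctional (k : ℤ) (i j : σ) : MvPolynomial σ ℤ →ₗ[ℤ] ℤ :=
  k • lcoeff ℤ (single i 4) - lcoeff ℤ (single i 3 + single j 1)

lemma single_add_single_ne_single {a b c : σ} (hab : a ≠ b) :
    single a 3 + single b 1 ≠ single c 4 := by
  intro h
  have := DFunLike.congr_fun h b
  simp only [Finsupp.add_apply, single_apply] at this
  grind

lemma relationFunctional_X_pow_four (hij : i ≠ j) (a : σ) :
    relationFunctional k i j (X a ^ 4) = if a = i then k else 0 := by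
  simp only [relationFunctional, LinearMap.sub_apply, LinearMap.smul_apply, lcoeff_apply,
    coeff_X_pow, single_left_inj four_ne_zero, Ne.symm (single_add_single_ne_single hij),
    if_false, sub_zero]
  split_ifs <;> simp

lemma relationFunctional_X_pow_three_mul_X {a b : σ} (hab : a ≠ b) (hai : a ≠ i) :
    relationFunctional k i j (X a ^ 3 * X b) = 0 := by
  have : single a 3 + single b 1 ≠ single i 3 + single j 1 := by
    intro h
    have := DFunLike.congr_fun h a
    simp only [Finsupp.add_apply, single_apply] at this
    grind
  simp only [relationFunctional, LinearMap.sub_apply, LinearMap.smul_apply, lcoeff_apply,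
    X_pow_three_mul_X, coeff_monomial, single_add_single_ne_single hab, this, if_false]
  simp

lemma relationFunctional_X_pow_three_mul_X_self (hij : i ≠ j) :
    relationFunctional k i j (X i ^ 3 * X j) = -1 := by
  simp only [relationFunctional, LinearMap.sub_apply, LinearMap.smul_apply, lcoeff_apply,
    X_pow_three_mul_X, coeff_monomial, single_add_single_ne_single hij, if_false, if_true]
  simp

end RelationFunctional

end MvPolynomial

def Hrelations (k n : ℕ) : Set (MvPolynomial (Fin (n + 1)) ℤ) :=
  {X (Fin.last n) ^ 4} ∪
    Set.range fun i : Fin n =>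
      X (Fin.castSucc i) ^ 4 + (k : ℤ) • (X (Fin.castSucc i) ^ 3 * X i.succ)

lemma Hideal_eq_span_Hrelations (k n : ℕ) : Hideal k n = Ideal.span (Hrelations k n) := rfl

lemma isHomogeneous_of_mem_Hrelations {k n : ℕ} {g : MvPolynomial (Fin (n + 1)) ℤ}
    (hg : g ∈ Hrelations k n) : g.IsHomogeneous 4 := by
  rcases hg with rfl | ⟨c, rfl⟩
  · exact isHomogeneous_X_pow _ 4
  · refine (isHomogeneous_X_pow _ 4).add ?_
    rw [smul_eq_C_mul]
    exact (((isHomogeneous_X_pow _ 3).mul (isHomogeneous_X _ _))).C_mul _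

lemma Hrelations_subset_ker (k n : ℕ) (c : Fin n) :
    Hrelations k n ⊆ LinearMap.ker (relationFunctional k (Fin.castSucc c) c.succ) := by
  have hc := (Fin.castSucc_lt_succ (i := c)).ne
  rintro g (rfl | ⟨d, rfl⟩) <;> simp only [SetLike.mem_coe, LinearMap.mem_ker]
  · simp [relationFunctional_X_pow_four _ hc, (Fin.castSucc_lt_last c).ne']
  · rw [map_add, map_zsmul, relationFunctional_X_pow_four _ hc]
    obtain rfl | hdc := eq_or_ne d c
    · simp [relationFunctional_X_pow_three_mul_X_self _ hc]
    · simp [relationFunctional_X_pow_three_mul_X _ (Fin.castSucc_lt_succ (i := d)).ne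
        (Fin.castSucc_injective _ |>.ne hdc), hdc]

lemma X_castSucc_pow_four_notMem_Hideal {k : ℕ} (hk : k ≠ 0) {n : ℕ} (c : Fin n) :
    X (Fin.castSucc c) ^ 4 ∉ Hideal k n := by
  intro h
  rw [Hideal_eq_span_Hrelations] at h
  have hspan := homogeneousComponent_mem_span_of_mem_ideal_span
    (fun _ => isHomogeneous_of_mem_Hrelations) h
  rw [homogeneousComponent_eq_self (isHomogeneous_X_pow _ 4)] at hspan
  have := Submodule.span_le.mpr (Hrelations_subset_ker k n c) hspan
  rw [LinearMap.mem_ker, relationFunctional_X_pow_four _ (Fin.castSucc_lt_succ (i := c)).ne,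
    if_pos rfl] at this
  exact hk (by exact_mod_cast this)

theorem stmt10 (k n : ℕ) (hk : 0 < k) (i : Fin (n + 1)) :
    Ht k n i ^ 4 = 0 ↔ i = Fin.last n := by
  rw [Ht, ← map_pow, Ideal.Quotient.eq_zero_iff_mem]
  constructor
  · intro h
    by_contra hi
    obtain ⟨c, rfl⟩ := Fin.exists_castSucc_eq.mpr hi
    exact X_castSucc_pow_four_notMem_Hideal hk.ne' c h
  · rintro rfl
    rw [Hideal_eq_span_Hrelations]
    exact Ideal.subset_span (Or.inl rfl)
end

section
/- Let f : H(k,n) → H(l,n) be a graded algebra isomorphism, and for j = 1,…,n let I_j(m,n) = (t_{n-j+1},…,t_n) ⊆ H(m,n). Then f(I_j(k,n)) = I_j(l,n) for all j. -/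
open MvPolynomial

/-- The ideal I_j(m, n vars) = (t_{n-j+1},…,t_n) of H(m,·): the ideal generated
by the last `j` variables.  With variables indexed by `Fin (n+1)`
(i.e. `n+1` variables), these are the `t_i` with `(n+1) - j ≤ i`. -/
noncomputable def Iideal (m n j : ℕ) : Ideal (HRing m n) :=
  Ideal.span {x | ∃ i : Fin (n + 1), (n + 1) - j ≤ (i : ℕ) ∧ x = Ht m n i}

/-!
By induction on `j`, applied to both `f` and `f⁻¹`, it suffices to show that a graded map `φ`
with `φ(I_j) ⊆ I_j` satisfies `φ(I_{j+1}) ⊆ I_{j+1}`. The new generator `t_i` of `I_{j+1}`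
has `t_i⁴ ∈ I_j`, by the relation `t_i⁴ = -k t_i³ t_{i+1}` (or `t_i⁴ = 0` for the last
variable), and `φ(t_i)` is a linear form `∑ c_s t_s` whose fourth power lies in `I_j`.
For `s` below the generators of `I_{j+1}`, the ring map `H(l,n) → H(l,2)` sending `t_s`, `t_{s+1}`
to the two generators `u`, `w` and all other variables to `0` kills `I_j`, so
`(c_s u + c_{s+1} w)⁴ = 0`. Comparing the coefficients of `u⁴`, `u³w` and `u²w²` with those of
the relations `w⁴` and `u⁴ + l u³ w` forces `c_s = 0`, because `l ≠ 0`.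
-/

section Relations

variable (m n : ℕ)

lemma Ht_last_pow_four : Ht m n (Fin.last n) ^ 4 = 0 := by
  rw [Ht, ← map_pow, Ideal.Quotient.eq_zero_iff_mem]
  exact Ideal.subset_span (Or.inl rfl)

lemma Ht_castSucc_pow_four (i : Fin n) :
    Ht m n i.castSucc ^ 4 + (m : ℤ) • (Ht m n i.castSucc ^ 3 * Ht m n i.succ) = 0 := by
  simp only [Ht, ← map_pow, ← map_mul, ← map_zsmul, ← map_add, Ideal.Quotient.eq_zero_iff_mem]
  exact Ideal.subset_span (Or.inr ⟨i, rfl⟩)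

lemma Iideal_zero : Iideal m n 0 = ⊥ := by
  rw [Iideal, Ideal.span_eq_bot]
  rintro _ ⟨i, hi, -⟩
  omega

variable {m n}

lemma Ht_mem_Iideal {j : ℕ} {i : Fin (n + 1)} (h : n + 1 - j ≤ i) : Ht m n i ∈ Iideal m n j :=
  Ideal.subset_span ⟨i, h, rfl⟩

lemma Ht_pow_four_mem_Iideal {j : ℕ} {i : Fin (n + 1)} (h : n + 1 - j ≤ i + 1) :
    Ht m n i ^ 4 ∈ Iideal m n j := by
  induction i using Fin.lastCases with
  | last => rw [Ht_last_pow_four]; exact zero_mem _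
  | cast i =>
    rw [eq_neg_of_add_eq_zero_left (Ht_castSucc_pow_four m n i)]
    refine neg_mem (Submodule.smul_of_tower_mem _ _ (Ideal.mul_mem_left _ _ (Ht_mem_Iideal ?_)))
    simpa using h

end Relations

lemma Hideal_one (l : ℕ) : Hideal l 1 =
    Ideal.span {(X 1 : MvPolynomial (Fin 2) ℤ) ^ 4, X 0 ^ 4 + (l : ℤ) • (X 0 ^ 3 * X 1)} := by
  rw [Hideal, Set.range_unique, Set.singleton_union]
  rfl

lemma coeff_eqs_of_linear_pow_four_eq {a b l : ℤ} {u v : MvPolynomial (Fin 2) ℤ}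
    (h : (a • X 0 + b • X 1 : MvPolynomial (Fin 2) ℤ) ^ 4 =
      u * X 1 ^ 4 + v * (X 0 ^ 4 + l • (X 0 ^ 3 * X 1))) :
    6 * a ^ 2 * b ^ 2 = 0 ∧ a ^ 4 = coeff 0 v ∧ 4 * a ^ 3 * b = coeff 0 v * l := by
  let m : ℕ → ℕ → (Fin 2 →₀ ℕ) := fun c d => Finsupp.single 0 c + Finsupp.single 1 d
  have hm (c d : ℕ) (r : ℤ) : monomial (m c d) r = C r * X 0 ^ c * X 1 ^ d := by
    rw [X_pow_eq_monomial, X_pow_eq_monomial, C_mul_monomial, monomial_mul, mul_one, mul_one]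
  have hlhs : (a • X 0 + b • X 1 : MvPolynomial (Fin 2) ℤ) ^ 4 =
      monomial (m 4 0) (a ^ 4) + monomial (m 3 1) (4 * a ^ 3 * b) +
        monomial (m 2 2) (6 * a ^ 2 * b ^ 2) + monomial (m 1 3) (4 * a * b ^ 3) +
        monomial (m 0 4) (b ^ 4) := by
    simp only [hm, smul_eq_C_mul, map_mul, map_pow, map_ofNat]
    ring
  have hrhs : u * X 1 ^ 4 + v * (X 0 ^ 4 + l • (X 0 ^ 3 * X 1)) =
      u * monomial (m 0 4) 1 + v * (monomial (m 4 0) 1 + monomial (m 3 1) l) := by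
    simp only [hm, smul_eq_C_mul, map_one]
    ring
  rw [hlhs, hrhs] at h
  have hcoeff (c d : ℕ) := congrArg (coeff (m c d)) h
  simp only [m, coeff_add, coeff_mul_monomial', coeff_monomial, mul_add, Finsupp.le_def,
    Fin.forall_fin_two, Finsupp.ext_iff, Finsupp.add_apply, Finsupp.single_apply] at hcoeff
  exact ⟨by simpa using hcoeff 2 2, by simpa using hcoeff 4 0, by simpa using hcoeff 3 1⟩

theorem eq_zero_of_linear_pow_four_eq_zero {l : ℕ} (hl : 0 < l) {a b : ℤ}
    (h : (a • Ht l 1 0 + b • Ht l 1 1) ^ 4 = 0) : a = 0 := by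
  have hmk : a • Ht l 1 0 + b • Ht l 1 1 = Ideal.Quotient.mk _ (a • X 0 + b • X 1) := by
    simp only [Ht, map_add, map_zsmul]
  rw [hmk, ← map_pow, Ideal.Quotient.eq_zero_iff_mem, Hideal_one, Ideal.mem_span_pair] at h
  obtain ⟨u, v, huv⟩ := h
  obtain ⟨h22, h40, h31⟩ := coeff_eqs_of_linear_pow_four_eq huv.symm
  have hab : a * b = 0 := by nlinarith
  rcases mul_eq_zero.mp hab with ha | rfl
  · exact ha
  · rw [← h40] at h31
    simpa [hl.ne'] using h31.symm

section PairProjection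

variable (l : ℕ) {n : ℕ}

noncomputable def pairVal (r : Fin n) (s : Fin (n + 1)) : HRing l 1 :=
  (if s = r.castSucc then Ht l 1 0 else 0) + (if s = r.succ then Ht l 1 1 else 0)

lemma aeval_pairVal_eq_zero_of_mem_Hideal (r : Fin n) :
    ∀ g ∈ Hideal l n, aeval (pairVal l r) g = 0 := by
  have hW : Ht l 1 1 ^ 4 = 0 := Ht_last_pow_four l 1
  have hV : Ht l 1 0 ^ 4 + (l : ℤ) • (Ht l 1 0 ^ 3 * Ht l 1 1) = 0 := Ht_castSucc_pow_four l 1 0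
  intro g hg
  refine (Ideal.span_le (I := RingHom.ker (aeval (pairVal l r)))).mpr ?_ hg
  have hr := r.isLt
  rintro _ (rfl | ⟨i, rfl⟩) <;>
    simp only [SetLike.mem_coe, RingHom.mem_ker, map_add, map_pow, map_zsmul, map_mul, aeval_X,
      pairVal, Fin.ext_iff, Fin.val_last, Fin.val_castSucc, Fin.val_succ] <;>
    split_ifs <;> first | (exfalso; omega) | simp_all

noncomputable def pairProj (r : Fin n) : HRing l n →+* HRing l 1 :=
  Ideal.Quotient.lift _ (aeval (pairVal l r)).toRingHom (aeval_pairVal_eq_zero_of_mem_Hideal l r)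

lemma pairProj_Ht (r : Fin n) (s : Fin (n + 1)) : pairProj l r (Ht l n s) = pairVal l r s :=
  (Ideal.Quotient.lift_mk _ _ _).trans (aeval_X _ _)

lemma pairProj_sum_smul_Ht (r : Fin n) (c : Fin (n + 1) → ℤ) :
    pairProj l r (∑ s, c s • Ht l n s) = c r.castSucc • Ht l 1 0 + c r.succ • Ht l 1 1 := by
  simp only [map_sum, map_zsmul, pairProj_Ht, pairVal, smul_add, smul_ite, smul_zero,
    Finset.sum_add_distrib, Finset.sum_ite_eq', Finset.mem_univ, if_true]

lemma Iideal_le_ker_pairProj {j : ℕ} (r : Fin n) (h : r + 2 ≤ n + 1 - j) :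
    Iideal l n j ≤ RingHom.ker (pairProj l r) := by
  refine Ideal.span_le.mpr ?_
  rintro _ ⟨s, hs, rfl⟩
  simp only [SetLike.mem_coe, RingHom.mem_ker, pairProj_Ht, pairVal, Fin.ext_iff,
    Fin.val_castSucc, Fin.val_succ]
  rw [if_neg (by omega), if_neg (by omega), add_zero]

end PairProjection

theorem eq_zero_of_sum_smul_Ht_pow_four_mem_Iideal {l n j : ℕ} (hl : 0 < l) {c : Fin (n + 1) → ℤ}
    (h : (∑ s, c s • Ht l n s) ^ 4 ∈ Iideal l n j) (s : Fin (n + 1)) (hs : s + 2 ≤ n + 1 - j) :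
    c s = 0 := by
  let r : Fin n := ⟨s, by omega⟩
  have hr : r.castSucc = s := rfl
  rw [← hr]
  refine eq_zero_of_linear_pow_four_eq_zero hl (b := c r.succ) ?_
  rw [← pairProj_sum_smul_Ht, ← map_pow]
  exact Iideal_le_ker_pairProj l r hs h

theorem sum_smul_Ht_mem_Iideal_succ {l n j : ℕ} (hl : 0 < l) {c : Fin (n + 1) → ℤ}
    (h : (∑ s, c s • Ht l n s) ^ 4 ∈ Iideal l n j) : ∑ s, c s • Ht l n s ∈ Iideal l n (j + 1) := by
  refine Ideal.sum_mem _ fun s _ => ?_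
  by_cases hs : s + 2 ≤ n + 1 - j
  · rw [eq_zero_of_sum_smul_Ht_pow_four_mem_Iideal hl h s hs, zero_smul]
    exact zero_mem _
  · exact Submodule.smul_of_tower_mem _ _ (Ht_mem_Iideal (by omega))

lemma PreservesGrading.exists_map_Ht_eq_sum {k l n : ℕ} {φ : HRing k n →+* HRing l n}
    (hφ : PreservesGrading φ) (i : Fin (n + 1)) :
    ∃ c : Fin (n + 1) → ℤ, φ (Ht k n i) = ∑ s, c s • Ht l n s := by
  obtain ⟨y, hy, hφy⟩ := hφ 1 (X i) (isHomogeneous_X ℤ i)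
  have hy' : y ∈ Submodule.span ℤ (Set.range X) := by
    rw [← homogeneousSubmodule_one_eq_span_X]
    exact hy
  obtain ⟨c, rfl⟩ := (Submodule.mem_span_range_iff_exists_fun ℤ).mp hy'
  exact ⟨c, by simp only [Ht, hφy, map_sum, map_zsmul]⟩

theorem PreservesGrading.map_Iideal_le {k l n : ℕ} (hl : 0 < l) {φ : HRing k n →+* HRing l n}
    (hφ : PreservesGrading φ) (j : ℕ) : Ideal.map φ (Iideal k n j) ≤ Iideal l n j := by
  induction j with
  | zero => simp [Iideal_zero]
  | succ j ih =>
    rw [Iideal, Ideal.map_span, Ideal.span_le]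
    rintro _ ⟨_, ⟨i, hi, rfl⟩, rfl⟩
    obtain ⟨c, hc⟩ := hφ.exists_map_Ht_eq_sum i
    rw [SetLike.mem_coe, hc]
    refine sum_smul_Ht_mem_Iideal_succ hl ?_
    rw [← hc, ← map_pow]
    exact ih (Ideal.mem_map_of_mem φ (Ht_pow_four_mem_Iideal (by omega)))

theorem stmt13_general (k l n : ℕ) (hk : 0 < k) (hl : 0 < l)
    (f : HRing k n ≃+* HRing l n) (hf : IsGradedIso f)
    (j : ℕ) :
    Ideal.map (f : HRing k n →+* HRing l n) (Iideal k n j) = Iideal l n j := by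
  refine le_antisymm (hf.1.map_Iideal_le hl j) ?_
  change _ ≤ Ideal.map f _
  rw [← Ideal.comap_symm, ← Ideal.map_le_iff_le_comap]
  exact hf.2.map_Iideal_le hk j

theorem stmt13 (k l n : ℕ) (hk : 0 < k) (hl : 0 < l)
    (f : HRing k n ≃+* HRing l n) (hf : IsGradedIso f)
    (j : ℕ) (hj1 : 1 ≤ j) (hj2 : j ≤ n + 1) :
    Ideal.map (f : HRing k n →+* HRing l n) (Iideal k n j) = Iideal l n j :=
  stmt13_general k l n hk hl f hf j
end

section
/- For positive integers k, l and n ≥ 2, the graded rings H(k,2) and H(l,2) are isomorphic if and only if k = l. More precisely, if f : H(k,2) → H(l,2) is a graded ring isomorphism, then writing f(t₁) = ε₁(t₁ + c t₂), f(t₂) = ε₂ t₂ with ε₁,ε₂ ∈ {±1}, c ∈ ℤ, the relation f(t₁⁴ + k t₁³t₂) = 0 forces c = 0 and k = l. -/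
open MvPolynomial

/- A graded isomorphism acts on the degree-2 part ℤt₁ ⊕ ℤt₂ of H(k,2) by an invertible integer
matrix. In H(l,2) the relations of polynomial degree 4 are spanned by t₂⁴ and t₁⁴ + l t₁³t₂, so
(a t₁ + b t₂)⁴ = 0 forces 6a²b² = 0 and 4a³b = l a⁴, i.e. a = 0 when l > 0; as t₂⁴ = 0, this gives
f(t₂) = ±t₂ and then f(t₁) = ε₁(t₁ + c t₂). Expanding f(t₁⁴ + k t₁³t₂) = 0 and comparing the
coefficients of t₁²t₂², t₁t₂³ and t₁³t₂ with the same description of the ideal gives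
6c² + 3kε₁ε₂c = 0, 4c³ + 3kε₁ε₂c² = 0 and 4c + kε₁ε₂ = l, whence 2c³ = 0 and kε₁ε₂ = l. -/

namespace HRing

def relator {R : Type*} [Ring R] (k : ℕ) (x y : R) : R := x ^ 4 + (k : ℤ) • (x ^ 3 * y)

lemma map_relator {R S : Type*} [Ring R] [Ring S] (f : R →+* S) (k : ℕ) (x y : R) :
    f (relator k x y) = relator k (f x) (f y) := by
  simp only [relator, map_add, map_pow, map_zsmul, map_mul]

noncomputable def expVec (a b : ℕ) : Fin 2 →₀ ℕ := Finsupp.single 0 a + Finsupp.single 1 b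

@[simp] lemma expVec_apply_zero (a b : ℕ) : expVec a b 0 = a := by simp [expVec]

@[simp] lemma expVec_apply_one (a b : ℕ) : expVec a b 1 = b := by simp [expVec]

lemma expVec_inj {a b a' b' : ℕ} : expVec a b = expVec a' b' ↔ a = a' ∧ b = b' :=
  ⟨fun h => ⟨by simpa using congr($h 0), by simpa using congr($h 1)⟩,
    fun ⟨ha, hb⟩ => ha ▸ hb ▸ rfl⟩

lemma expVec_le_expVec {a b a' b' : ℕ} : expVec a b ≤ expVec a' b' ↔ a ≤ a' ∧ b ≤ b' := by
  simp [Finsupp.le_def, Fin.forall_fin_two]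

lemma monomial_expVec (a b : ℕ) (r : ℤ) :
    (monomial (expVec a b) r : MvPolynomial (Fin 2) ℤ) = C r * X 0 ^ a * X 1 ^ b := by
  rw [X_pow_eq_monomial, X_pow_eq_monomial, C_apply, monomial_mul, monomial_mul]
  simp [expVec]

lemma coeff_expVec_monomial (a b a' b' : ℕ) (r : ℤ) :
    coeff (expVec a b) (monomial (expVec a' b') r : MvPolynomial (Fin 2) ℤ) =
      if a' = a ∧ b' = b then r else 0 := by
  simp [coeff_monomial, expVec_inj]

lemma smul_X_add_smul_X_pow_four (a b : ℤ) :
    (a • X 0 + b • X 1 : MvPolynomial (Fin 2) ℤ) ^ 4 =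
      monomial (expVec 4 0) (a ^ 4) + monomial (expVec 3 1) (4 * a ^ 3 * b) +
      monomial (expVec 2 2) (6 * a ^ 2 * b ^ 2) + monomial (expVec 1 3) (4 * a * b ^ 3) +
      monomial (expVec 0 4) (b ^ 4) := by
  simp only [smul_eq_C_mul, monomial_expVec, map_mul, map_pow, map_ofNat]
  ring

lemma relator_smul_X_add_smul_X (k : ℕ) (ε₁ ε₂ c : ℤ) :
    relator k (ε₁ • (X 0 + c • X 1) : MvPolynomial (Fin 2) ℤ) (ε₂ • X 1) =
      monomial (expVec 4 0) (ε₁ ^ 4) +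
      monomial (expVec 3 1) (4 * ε₁ ^ 4 * c + k * ε₁ ^ 3 * ε₂) +
      monomial (expVec 2 2) (6 * ε₁ ^ 4 * c ^ 2 + 3 * k * ε₁ ^ 3 * ε₂ * c) +
      monomial (expVec 1 3) (4 * ε₁ ^ 4 * c ^ 3 + 3 * k * ε₁ ^ 3 * ε₂ * c ^ 2) +
      monomial (expVec 0 4) (ε₁ ^ 4 * c ^ 4 + k * ε₁ ^ 3 * ε₂ * c ^ 3) := by
  simp only [relator, smul_eq_C_mul, monomial_expVec, map_mul, map_pow, map_add, map_ofNat,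
    map_natCast]
  ring

lemma Hideal_one_eq_span_pair (l : ℕ) :
    Hideal l 1 = Ideal.span {(monomial (expVec 0 4) 1 : MvPolynomial (Fin 2) ℤ),
      monomial (expVec 4 0) 1 + monomial (expVec 3 1) (l : ℤ)} := by
  rw [Hideal, Set.range_unique, Set.singleton_union]
  congr 3
  · simp [monomial_expVec]
  · simp only [monomial_expVec, smul_eq_C_mul, map_natCast, C_1, Fin.default_eq_zero,
      Fin.castSucc_zero, Fin.succ_zero_eq_one]
    ring

lemma coeff_of_mem_Hideal_one {l : ℕ} {p : MvPolynomial (Fin 2) ℤ} (hp : p ∈ Hideal l 1) :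
    coeff (expVec 2 2) p = 0 ∧ coeff (expVec 1 3) p = 0 ∧
      coeff (expVec 3 1) p = l * coeff (expVec 4 0) p ∧
      coeff (expVec 1 0) p = 0 ∧ coeff (expVec 0 1) p = 0 := by
  rw [Hideal_one_eq_span_pair] at hp
  obtain ⟨u, v, rfl⟩ := Ideal.mem_span_pair.mp hp
  refine ⟨?_, ?_, ?_, ?_, ?_⟩ <;>
    simp [mul_add, coeff_mul_monomial', expVec_le_expVec, mul_comm]

lemma Ht_eq_mk (l : ℕ) (i : Fin 2) : Ht l 1 i = Ideal.Quotient.mk (Hideal l 1) (X i) := rfl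

lemma Ht_one_pow_four (k : ℕ) : Ht k 1 1 ^ 4 = 0 := by
  rw [Ht_eq_mk, ← map_pow, Ideal.Quotient.eq_zero_iff_mem]
  exact Ideal.subset_span (Or.inl rfl)

lemma relator_Ht (k : ℕ) : relator k (Ht k 1 0) (Ht k 1 1) = 0 := by
  simp only [relator, Ht_eq_mk, ← map_pow, ← map_mul, ← map_zsmul, ← map_add,
    Ideal.Quotient.eq_zero_iff_mem]
  exact Ideal.subset_span (Or.inr ⟨0, rfl⟩)

lemma linearIndependent_Ht (l : ℕ) : LinearIndependent ℤ ![Ht l 1 0, Ht l 1 1] := by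
  refine LinearIndependent.pair_iff.mpr fun a b h => ?_
  simp only [Ht_eq_mk, ← map_zsmul, ← map_add, Ideal.Quotient.eq_zero_iff_mem] at h
  obtain ⟨-, -, -, ha, hb⟩ := coeff_of_mem_Hideal_one h
  rw [coeff_add, coeff_smul, coeff_smul] at ha hb
  simpa [coeff_X, expVec, Finsupp.single_eq_single_iff] using And.intro ha hb

lemma exists_mk_eq_of_isHomogeneous_one {l : ℕ} {y : MvPolynomial (Fin 2) ℤ}
    (hy : y.IsHomogeneous 1) :
    ∃ a b : ℤ, Ideal.Quotient.mk (Hideal l 1) y = a • Ht l 1 0 + b • Ht l 1 1 := by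
  have hy' : y ∈ homogeneousSubmodule (Fin 2) ℤ 1 := hy
  rw [homogeneousSubmodule_one_eq_span_X, Submodule.mem_span_range_iff_exists_fun] at hy'
  obtain ⟨c, rfl⟩ := hy'
  exact ⟨c 0, c 1, by simp [Fin.sum_univ_two, Ht_eq_mk]⟩

lemma _root_.PreservesGrading.exists_map_Ht_eq {k l : ℕ} {f : HRing k 1 →+* HRing l 1}
    (hf : PreservesGrading f) (i : Fin 2) :
    ∃ a b : ℤ, f (Ht k 1 i) = a • Ht l 1 0 + b • Ht l 1 1 := by
  obtain ⟨y, hy, hfy⟩ := hf 1 (X i) (isHomogeneous_X _ _)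
  obtain ⟨a, b, hab⟩ := exists_mk_eq_of_isHomogeneous_one (l := l) hy
  exact ⟨a, b, hfy.trans hab⟩

lemma eq_zero_of_smul_Ht_add_smul_Ht_pow_four_eq_zero {l : ℕ} (hl : 0 < l) {a b : ℤ}
    (h : (a • Ht l 1 0 + b • Ht l 1 1) ^ 4 = 0) : a = 0 := by
  simp only [Ht_eq_mk, ← map_zsmul, ← map_add, ← map_pow, Ideal.Quotient.eq_zero_iff_mem] at h
  rw [smul_X_add_smul_X_pow_four] at h
  obtain ⟨h22, -, h31, -, -⟩ := coeff_of_mem_Hideal_one h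
  norm_num only [coeff_add, coeff_expVec_monomial, and_self, ite_true, ite_false, add_zero,
    zero_add] at h22 h31
  have hab : a * b = 0 := by simpa [mul_pow] using h22
  have hla : (l : ℤ) * a ^ 4 = 0 := by linear_combination -h31 + 4 * a ^ 2 * hab
  simpa [hl.ne'] using hla

lemma eq_zero_and_eq_of_relator_eq_zero {k l : ℕ} {ε₁ ε₂ c : ℤ} (hε₁ : ε₁ = 1 ∨ ε₁ = -1)
    (hε₂ : ε₂ = 1 ∨ ε₂ = -1)
    (h : relator k (ε₁ • (Ht l 1 0 + c • Ht l 1 1)) (ε₂ • Ht l 1 1) = 0) :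
    c = 0 ∧ k = l := by
  simp only [Ht_eq_mk, ← map_zsmul, ← map_add, ← map_relator,
    Ideal.Quotient.eq_zero_iff_mem] at h
  rw [relator_smul_X_add_smul_X] at h
  obtain ⟨h22, h13, h31, -, -⟩ := coeff_of_mem_Hideal_one h
  norm_num only [coeff_add, coeff_expVec_monomial, and_self, ite_true, ite_false, add_zero,
    zero_add] at h22 h13 h31
  have hε₁sq : ε₁ ^ 2 = 1 := by rcases hε₁ with rfl | rfl <;> norm_num
  obtain rfl : c = 0 := by
    have : 2 * c ^ 3 = 0 := by
      linear_combination c * h22 - h13 - (2 * c ^ 3 * (ε₁ ^ 2 + 1)) * hε₁sq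
    simpa using this
  rcases hε₁ with rfl | rfl <;> rcases hε₂ with rfl | rfl <;> norm_num at h31 <;> omega

lemma _root_.IsGradedIso.exists_normal_form {k l : ℕ} (hl : 0 < l) {f : HRing k 1 ≃+* HRing l 1}
    (hf : IsGradedIso f) :
    ∃ ε₁ ε₂ c : ℤ, (ε₁ = 1 ∨ ε₁ = -1) ∧ (ε₂ = 1 ∨ ε₂ = -1) ∧
      f (Ht k 1 0) = ε₁ • (Ht l 1 0 + c • Ht l 1 1) ∧ f (Ht k 1 1) = ε₂ • Ht l 1 1 := by
  obtain ⟨a₁, b₁, hf₀⟩ := PreservesGrading.exists_map_Ht_eq hf.1 0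
  obtain ⟨a₂, b₂, hf₁⟩ := PreservesGrading.exists_map_Ht_eq hf.1 1
  obtain ⟨g₁, d₁, hg₀⟩ := PreservesGrading.exists_map_Ht_eq hf.2 0
  obtain ⟨g₂, d₂, hg₁⟩ := PreservesGrading.exists_map_Ht_eq hf.2 1
  simp only [RingEquiv.coe_toRingHom] at hf₀ hf₁ hg₀ hg₁
  obtain rfl : a₂ = 0 := eq_zero_of_smul_Ht_add_smul_Ht_pow_four_eq_zero hl <| by
    rw [← hf₁, ← map_pow, Ht_one_pow_four, map_zero]
  have hcoeff : ∀ {s t g d : ℤ},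
      f.symm (s • Ht l 1 0 + t • Ht l 1 1) = g • Ht k 1 0 + d • Ht k 1 1 →
      s = g * a₁ ∧ t = g * b₁ + d * b₂ := fun hg => (linearIndependent_Ht l).eq_of_pair <| by
    rw [← f.apply_symm_apply (_ + _), hg, map_add, map_zsmul, map_zsmul, hf₀, hf₁]
    module
  obtain ⟨h₁, -⟩ := hcoeff (s := 1) (t := 0) (by rwa [one_smul, zero_smul, add_zero])
  obtain ⟨h₂, h₃⟩ := hcoeff (s := 0) (t := 1) (by rwa [one_smul, zero_smul, zero_add])
  have ha₁ : a₁ = 1 ∨ a₁ = -1 :=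
    Int.eq_one_or_neg_one_of_mul_eq_one (v := g₁) (by rw [mul_comm, h₁])
  obtain rfl : g₂ = 0 :=
    (mul_eq_zero.mp h₂.symm).resolve_right (right_ne_zero_of_mul_eq_one h₁.symm)
  have hb₂ : b₂ = 1 ∨ b₂ = -1 :=
    Int.eq_one_or_neg_one_of_mul_eq_one (v := d₂) (by linear_combination -h₃)
  refine ⟨a₁, b₂, a₁ * b₁, ha₁, hb₂, ?_, by rw [hf₁, zero_smul, zero_add]⟩
  rw [hf₀]
  rcases ha₁ with rfl | rfl <;> module

end HRing

open HRing in
theorem stmt14_general (k l : ℕ) (hl : 0 < l) :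
    ((∃ f : HRing k 1 ≃+* HRing l 1, IsGradedIso f) ↔ k = l) ∧
    ∀ (f : HRing k 1 ≃+* HRing l 1), IsGradedIso f →
      ∀ (ε₁ ε₂ c : ℤ), (ε₁ = 1 ∨ ε₁ = -1) → (ε₂ = 1 ∨ ε₂ = -1) →
        f (Ht k 1 0) = ε₁ • (Ht l 1 0 + c • Ht l 1 1) →
        f (Ht k 1 1) = ε₂ • Ht l 1 1 →
        c = 0 ∧ k = l := by
  have normal_form_rigid : ∀ (f : HRing k 1 ≃+* HRing l 1) (ε₁ ε₂ c : ℤ),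
      (ε₁ = 1 ∨ ε₁ = -1) → (ε₂ = 1 ∨ ε₂ = -1) →
      f (Ht k 1 0) = ε₁ • (Ht l 1 0 + c • Ht l 1 1) → f (Ht k 1 1) = ε₂ • Ht l 1 1 →
      c = 0 ∧ k = l := fun f ε₁ ε₂ c hε₁ hε₂ hf₀ hf₁ =>
    eq_zero_and_eq_of_relator_eq_zero hε₁ hε₂ <| by
      rw [← hf₀, ← hf₁, ← RingEquiv.coe_toRingHom, ← map_relator, relator_Ht, map_zero]
  refine ⟨⟨fun ⟨f, hf⟩ => ?_, ?_⟩, fun f _ => normal_form_rigid f⟩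
  · obtain ⟨ε₁, ε₂, c, hε₁, hε₂, hf₀, hf₁⟩ := hf.exists_normal_form hl
    exact (normal_form_rigid f ε₁ ε₂ c hε₁ hε₂ hf₀ hf₁).2
  · rintro rfl
    exact ⟨RingEquiv.refl _, fun _ x hx => ⟨x, hx, rfl⟩, fun _ x hx => ⟨x, hx, rfl⟩⟩

theorem stmt14 (k l : ℕ) (hk : 0 < k) (hl : 0 < l) :
    ((∃ f : HRing k 1 ≃+* HRing l 1, IsGradedIso f) ↔ k = l) ∧
    ∀ (f : HRing k 1 ≃+* HRing l 1), IsGradedIso f →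
      ∀ (ε₁ ε₂ c : ℤ), (ε₁ = 1 ∨ ε₁ = -1) → (ε₂ = 1 ∨ ε₂ = -1) →
        f (Ht k 1 0) = ε₁ • (Ht l 1 0 + c • Ht l 1 1) →
        f (Ht k 1 1) = ε₂ • Ht l 1 1 →
        c = 0 ∧ k = l :=
  stmt14_general k l hl
end
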